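/- A finite direct product G₁ × G₂ is mixable if and only if both G₁ and G₂ are mixable. -/

import Mathlib

open scoped Classical

/-- The distribution of the random subproduct `g 0 ^ ε 0 * ⋯ * g (k-1) ^ ε (k-1)`,
where `ε i` are independent Bernoulli variables with parameters `p i`. -/
noncomputable def subprodDist {G : Type*} [Group G] {k : ℕ} (g : Fin k → G)
    (p : Fin k → ℝ) (a : G) : ℝ :=
  ∑ ε : Fin k → Bool,
    (∏ i : Fin k, if ε i then p i else 1 - p i) *
      (if (List.ofFn fun i => if ε i then g i else 1).prod = a then 1 else 0)

/-- `(g, p)` is a mixing sequence: valid probabilities whose random subproduct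
is uniform on `G`. -/
def IsMixingSeq {G : Type*} [Group G] {k : ℕ} (g : Fin k → G) (p : Fin k → ℝ) : Prop :=
  (∀ i, 0 ≤ p i ∧ p i ≤ 1) ∧ ∀ a : G, subprodDist g p a = 1 / (Nat.card G : ℝ)

/-- A group is mixable if it admits a mixing sequence. -/
def Mixable (G : Type*) [Group G] : Prop :=
  ∃ (k : ℕ) (g : Fin k → G) (p : Fin k → ℝ), IsMixingSeq g p

/-- The mixing length of a group: minimal length of a mixing sequence. -/
noncomputable def mixlen (G : Type*) [Group G] : ℕ :=
  sInf {k | ∃ (g : Fin k → G) (p : Fin k → ℝ), IsMixingSeq g p}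

/-! Pushing the random subproduct forward along a surjective homomorphism `G →* H` keeps it
uniform, because all fibres have `|G| / |H|` elements; applied to the two projections this shows
that the factors of a mixable product are mixable. Conversely, running a mixing sequence of `G₁`
inside `G₁ × 1` followed by one of `G₂` inside `1 × G₂` makes the two coordinates of the product
independent and uniform. -/

open Finset

section Subproduct

variable {G H : Type*} [Group G] [Group H] {k m : ℕ}

def subprod (g : Fin k → G) (ε : Fin k → Bool) : G :=
  (List.ofFn fun i => if ε i then g i else 1).prod

def bernoulliWeight (p : Fin k → ℝ) (ε : Fin k → Bool) : ℝ :=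
  ∏ i, if ε i then p i else 1 - p i

lemma subprodDist_eq (g : Fin k → G) (p : Fin k → ℝ) (a : G) :
    subprodDist g p a = ∑ ε, bernoulliWeight p ε * if subprod g ε = a then 1 else 0 :=
  rfl

lemma subprod_map (φ : G →* H) (g : Fin k → G) (ε : Fin k → Bool) :
    subprod (φ ∘ g) ε = φ (subprod g ε) := by
  rw [subprod, subprod, ← List.prod_hom _ φ, List.map_ofFn]
  congr 2 with i
  by_cases hε : ε i <;> simp [hε]

lemma subprod_append (g : Fin k → G) (h : Fin m → G) (ε₁ : Fin k → Bool) (ε₂ : Fin m → Bool) :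
    subprod (Fin.append g h) (Fin.append ε₁ ε₂) = subprod g ε₁ * subprod h ε₂ := by
  simp only [subprod, ← List.prod_append, ← List.ofFn_fin_append]
  congr 2 with i
  refine Fin.addCases (fun i => ?_) (fun j => ?_) i <;> simp

lemma bernoulliWeight_append (p : Fin k → ℝ) (q : Fin m → ℝ) (ε₁ : Fin k → Bool)
    (ε₂ : Fin m → Bool) :
    bernoulliWeight (Fin.append p q) (Fin.append ε₁ ε₂) =
      bernoulliWeight p ε₁ * bernoulliWeight q ε₂ := by
  simp [bernoulliWeight, Fin.prod_univ_add]

lemma subprodDist_map [Fintype G] (φ : G →* H) (g : Fin k → G) (p : Fin k → ℝ) (c : H) :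
    subprodDist (φ ∘ g) p c = ∑ a with φ a = c, subprodDist g p a := by
  simp only [subprodDist_eq, subprod_map]
  rw [sum_comm]
  refine sum_congr rfl fun ε _ => ?_
  rw [← mul_sum, sum_ite_eq]
  simp

lemma subprodDist_append_inl_inr (g : Fin k → G) (p : Fin k → ℝ) (h : Fin m → H)
    (q : Fin m → ℝ) (a : G) (b : H) :
    subprodDist (Fin.append (MonoidHom.inl G H ∘ g) (MonoidHom.inr G H ∘ h)) (Fin.append p q)
      (a, b) = subprodDist g p a * subprodDist h q b := by
  rw [subprodDist_eq, ← (Fin.appendEquiv k m).sum_comp, Fintype.sum_prod_type, subprodDist_eq,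
    subprodDist_eq, sum_mul_sum]
  simp only [Fin.appendEquiv, Equiv.coe_fn_mk, bernoulliWeight_append, subprod_append,
    subprod_map]
  refine sum_congr rfl fun ε₁ _ => sum_congr rfl fun ε₂ _ => ?_
  rw [mul_mul_mul_comm, ite_zero_mul_ite_zero, one_mul]
  simp [Prod.ext_iff]

end Subproduct

lemma MonoidHom.card_fiber_mul_card_of_surjective {G H : Type*} [Group G] [Group H] [Fintype G]
    [Fintype H] {φ : G →* H} (hφ : Function.Surjective φ) (c : H) :
    #{a | φ a = c} * Fintype.card H = Fintype.card G := by
  have hfiber (c' : H) : #{a | φ a = c'} = #{a | φ a = c} :=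
    MonoidHom.card_fiber_eq_of_mem_range φ (hφ c') (hφ c)
  rw [← card_univ (α := G), card_eq_sum_card_fiberwise (s := univ) (f := φ) (t := univ) (by simp)]
  simp [hfiber, mul_comm]

namespace Mixable

variable {G H : Type*} [Group G] [Group H]

theorem of_surjective [Finite G] (φ : G →* H) (hφ : Function.Surjective φ) (hG : Mixable G) :
    Mixable H := by
  obtain ⟨k, g, p, hp, hu⟩ := hG
  have := Finite.of_surjective φ hφ
  have := Fintype.ofFinite G
  have := Fintype.ofFinite H
  refine ⟨k, φ ∘ g, p, hp, fun c => ?_⟩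
  have hcard : (#{a | φ a = c} : ℝ) * Fintype.card H = Fintype.card G := by
    exact_mod_cast φ.card_fiber_mul_card_of_surjective hφ c
  rw [subprodDist_map]
  simp only [hu, sum_const, nsmul_eq_mul, Nat.card_eq_fintype_card]
  field_simp
  exact hcard

theorem prod (hG : Mixable G) (hH : Mixable H) : Mixable (G × H) := by
  obtain ⟨k, g, p, hp, hu⟩ := hG
  obtain ⟨m, h, q, hq, hv⟩ := hH
  refine ⟨k + m, Fin.append (MonoidHom.inl G H ∘ g) (MonoidHom.inr G H ∘ h), Fin.append p q,
    fun i => ?_, fun ⟨a, b⟩ => ?_⟩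
  · refine Fin.addCases (fun i => ?_) (fun j => ?_) i
    · simpa using hp i
    · simpa using hq j
  · rw [subprodDist_append_inl_inr, hu, hv, Nat.card_prod]
    push_cast
    ring

end Mixable

/-- A finite direct product `G₁ × G₂` is mixable iff both factors are mixable. -/
theorem mixable_prod_iff (G₁ G₂ : Type*) [Group G₁] [Group G₂] [Finite G₁] [Finite G₂] :
    Mixable (G₁ × G₂) ↔ Mixable G₁ ∧ Mixable G₂ :=
  ⟨fun h => ⟨h.of_surjective (MonoidHom.fst G₁ G₂) Prod.fst_surjective,
      h.of_surjective (MonoidHom.snd G₁ G₂) Prod.snd_surjective⟩,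
    fun ⟨h₁, h₂⟩ => h₁.prod h₂⟩
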